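/- arXiv:1102.5492 — 11 statements merged into one kernel-verified Lean document; each statement's English description precedes it below -/
import Mathlib

section
/- Let a_1,...,a_n and b_1,...,b_n be real numbers with 0 < m_1 ≤ a_i ≤ M_1 and 0 < m_2 ≤ b_i ≤ M_2 for all i. Then (∑ b_k²) + (m_2 M_2)/(m_1 M_1) (∑ a_k²) ≤ (M_2/m_1 + m_2/M_1) ∑ a_k b_k. -/
theorem diaz_metcalf (n : ℕ) (a b : Fin n → ℝ) (m₁ M₁ m₂ M₂ : ℝ)
    (hm₁ : 0 < m₁) (hm₂ : 0 < m₂)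
    (ha : ∀ i, m₁ ≤ a i ∧ a i ≤ M₁) (hb : ∀ i, m₂ ≤ b i ∧ b i ≤ M₂) :
    (∑ k, (b k) ^ 2) + (m₂ * M₂) / (m₁ * M₁) * ∑ k, (a k) ^ 2 ≤
      (M₂ / m₁ + m₂ / M₁) * ∑ k, a k * b k := by
  rw [Finset.mul_sum, Finset.mul_sum, ← Finset.sum_add_distrib]
  apply Finset.sum_le_sum
  intro k _
  obtain ⟨ha1, ha2⟩ := ha k
  obtain ⟨hb1, hb2⟩ := hb k
  have hM₁ : 0 < M₁ := hm₁.trans_le (ha1.trans ha2)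
  have key : 0 ≤ (M₂ * a k - m₁ * b k) * (M₁ * b k - m₂ * a k) := by
    apply mul_nonneg
    · nlinarith
    · nlinarith
  have h : (0:ℝ) < m₁ * M₁ := by positivity
  rw [div_add_div _ _ hm₁.ne' hM₁.ne', div_mul_eq_mul_div, div_mul_eq_mul_div,
    add_div' _ _ _ h.ne', div_le_div_iff₀ h h]
  nlinarith
end

section
/- Let a_1,...,a_n and b_1,...,b_n be real numbers with 0 < m_1 ≤ a_i ≤ M_1 and 0 < m_2 ≤ b_i ≤ M_2 for all i. Then (∑ a_k²)(∑ b_k²) ≤ (1/4)(√(M_1 M_2/(m_1 m_2)) + √(m_1 m_2/(M_1 M_2)))² (∑ a_k b_k)². -/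
theorem polya_szego (n : ℕ) (a b : Fin n → ℝ) (m₁ M₁ m₂ M₂ : ℝ)
    (hm₁ : 0 < m₁) (hm₂ : 0 < m₂)
    (ha : ∀ i, m₁ ≤ a i ∧ a i ≤ M₁) (hb : ∀ i, m₂ ≤ b i ∧ b i ≤ M₂) :
    (∑ k, (a k) ^ 2) * (∑ k, (b k) ^ 2) ≤
      (1 / 4) * (Real.sqrt (M₁ * M₂ / (m₁ * m₂)) + Real.sqrt (m₁ * m₂ / (M₁ * M₂))) ^ 2 *
        (∑ k, a k * b k) ^ 2 := by
  rcases Nat.eq_zero_or_pos n with hn | hn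
  · subst hn
    simp
  · obtain ⟨i0⟩ := Fin.pos_iff_nonempty.mp hn
    have hM₁ : 0 < M₁ := lt_of_lt_of_le hm₁ (le_trans (ha i0).1 (ha i0).2)
    have hM₂ : 0 < M₂ := lt_of_lt_of_le hm₂ (le_trans (hb i0).1 (hb i0).2)
    set A := ∑ k, (a k) ^ 2 with hA
    set B := ∑ k, (b k) ^ 2 with hB
    set S := ∑ k, a k * b k with hS
    have hA0 : 0 ≤ A := Finset.sum_nonneg fun i _ => sq_nonneg _
    have hB0 : 0 ≤ B := Finset.sum_nonneg fun i _ => sq_nonneg _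
    have key : m₂ * M₂ * A + m₁ * M₁ * B ≤ (m₁ * m₂ + M₁ * M₂) * S := by
      rw [hA, hB, hS, Finset.mul_sum, Finset.mul_sum, Finset.mul_sum,
        ← Finset.sum_add_distrib]
      refine Finset.sum_le_sum fun i _ => ?_
      obtain ⟨ha1, ha2⟩ := ha i
      obtain ⟨hb1, hb2⟩ := hb i
      have h1 : 0 ≤ M₂ * a i - m₁ * b i := by nlinarith
      have h2 : 0 ≤ M₁ * b i - m₂ * a i := by nlinarith
      nlinarith [mul_nonneg h1 h2]
    have hx : 0 ≤ m₂ * M₂ * A + m₁ * M₁ * B := by positivity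
    have hAB : 4 * ((m₁ * m₂) * (M₁ * M₂)) * (A * B) ≤ ((m₁ * m₂ + M₁ * M₂) * S) ^ 2 := by
      nlinarith [sq_nonneg (m₂ * M₂ * A - m₁ * M₁ * B), key, hx]
    have hsq : (Real.sqrt (M₁ * M₂ / (m₁ * m₂)) + Real.sqrt (m₁ * m₂ / (M₁ * M₂))) ^ 2 =
        (m₁ * m₂ + M₁ * M₂) ^ 2 / ((m₁ * m₂) * (M₁ * M₂)) := by
      have h2 : Real.sqrt (M₁ * M₂ / (m₁ * m₂)) * Real.sqrt (m₁ * m₂ / (M₁ * M₂)) = 1 := by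
        rw [← Real.sqrt_mul (by positivity)]
        have h1 : (M₁ * M₂ / (m₁ * m₂)) * (m₁ * m₂ / (M₁ * M₂)) = 1 := by field_simp
        rw [h1, Real.sqrt_one]
      rw [add_sq, Real.sq_sqrt (by positivity), Real.sq_sqrt (by positivity), mul_assoc, h2]
      field_simp
      ring
    have h4 : (0:ℝ) < 4 * ((m₁ * m₂) * (M₁ * M₂)) := by positivity
    have heq : (1/4) * ((m₁ * m₂ + M₁ * M₂) ^ 2 / ((m₁ * m₂) * (M₁ * M₂))) * S ^ 2 =
        ((m₁ * m₂ + M₁ * M₂) * S) ^ 2 / (4 * ((m₁ * m₂) * (M₁ * M₂))) := by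
      field_simp
    rw [hsq, heq, le_div_iff₀ h4]
    nlinarith [hAB]
end

section
/- Let a_1,...,a_n and b_1,...,b_n be positive real numbers with 0 < m_1 ≤ a_i ≤ M_1 and 0 < m_2 ≤ b_i ≤ M_2 for all i, and assume ∑ a_k b_k > 0 and ∑ b_k² > 0. Then (∑ a_k²)/(∑ a_k b_k) − (∑ a_k b_k)/(∑ b_k²) ≤ (√(M_1/m_2) − √(m_1/M_2))². -/
theorem shisha_mond (n : ℕ) (a b : Fin n → ℝ) (m₁ M₁ m₂ M₂ : ℝ)
    (hm₁ : 0 < m₁) (hm₂ : 0 < m₂)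
    (ha : ∀ i, m₁ ≤ a i ∧ a i ≤ M₁) (hb : ∀ i, m₂ ≤ b i ∧ b i ≤ M₂)
    (hab : 0 < ∑ k, a k * b k) (hbb : 0 < ∑ k, (b k) ^ 2) :
    (∑ k, (a k) ^ 2) / (∑ k, a k * b k) - (∑ k, a k * b k) / (∑ k, (b k) ^ 2) ≤
      (Real.sqrt (M₁ / m₂) - Real.sqrt (m₁ / M₂)) ^ 2 := by
  have hn : n ≠ 0 := by rintro rfl; simp at hbb
  have i0 : Fin n := ⟨0, Nat.pos_of_ne_zero hn⟩
  have hM₂ : 0 < M₂ := lt_of_lt_of_le hm₂ (le_trans (hb i0).1 (hb i0).2)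
  have hM₁ : 0 < M₁ := lt_of_lt_of_le hm₁ (le_trans (ha i0).1 (ha i0).2)
  set m : ℝ := m₁ / M₂ with hm_def
  set M : ℝ := M₁ / m₂ with hM_def
  have hm : 0 < m := div_pos hm₁ hM₂
  have hM : 0 < M := div_pos hM₁ hm₂
  -- per-term inequality
  have key : (∑ k, (a k) ^ 2) ≤ (m + M) * (∑ k, a k * b k) - m * M * (∑ k, (b k) ^ 2) := by
    rw [Finset.mul_sum, Finset.mul_sum, ← Finset.sum_sub_distrib]
    apply Finset.sum_le_sum
    intro i _
    have hbi : 0 < b i := lt_of_lt_of_le hm₂ (hb i).1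
    have h1 : m * b i ≤ a i := by
      have : m * b i ≤ m * M₂ := mul_le_mul_of_nonneg_left (hb i).2 hm.le
      have h2 : m * M₂ = m₁ := div_mul_cancel₀ _ hM₂.ne'
      linarith [(ha i).1]
    have h2 : a i ≤ M * b i := by
      have : M * m₂ ≤ M * b i := mul_le_mul_of_nonneg_left (hb i).1 hM.le
      have h3 : M * m₂ = M₁ := div_mul_cancel₀ _ hm₂.ne'
      linarith [(ha i).2]
    nlinarith [mul_nonneg (sub_nonneg.2 h1) (sub_nonneg.2 h2)]
  set A := ∑ k, (a k) ^ 2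
  set B := ∑ k, a k * b k
  set C := ∑ k, (b k) ^ 2
  set s := Real.sqrt (m * M) with hs_def
  have hs : s ^ 2 = m * M := Real.sq_sqrt (mul_pos hm hM).le
  have hrhs : (Real.sqrt M - Real.sqrt m) ^ 2 = m + M - 2 * s := by
    have h1 : Real.sqrt m ^ 2 = m := Real.sq_sqrt hm.le
    have h2 : Real.sqrt M ^ 2 = M := Real.sq_sqrt hM.le
    have h3 : Real.sqrt M * Real.sqrt m = s := by
      rw [hs_def, mul_comm m M, Real.sqrt_mul hM.le]
    rw [sub_sq, h1, h2, mul_assoc, h3]; ring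
  rw [hrhs]
  rw [div_sub_div _ _ hab.ne' hbb.ne', div_le_iff₀ (mul_pos hab hbb)]
  have h4 : 2 * s * (B * C) ≤ B ^ 2 + m * M * C ^ 2 := by
    nlinarith [sq_nonneg (B - s * C), hs]
  have h5 : A * C ≤ ((m + M) * B - m * M * C) * C :=
    mul_le_mul_of_nonneg_right key hbb.le
  nlinarith [h4, h5]
end

section
/- Let a_1,...,a_n be real numbers with 0 < m ≤ a_i ≤ M for all i. Then ((1/n)∑ a_i²)((1/n)∑ a_i^{-2}) ≤ (M² + m²)²/(4M²m²). -/
theorem schweitzer (n : ℕ) (a : Fin n → ℝ) (m M : ℝ) (hm : 0 < m)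
    (ha : ∀ i, m ≤ a i ∧ a i ≤ M) :
    ((1 / n : ℝ) * ∑ i, (a i) ^ 2) * ((1 / n : ℝ) * ∑ i, (a i) ^ (-2 : ℤ)) ≤
      (M ^ 2 + m ^ 2) ^ 2 / (4 * M ^ 2 * m ^ 2) := by
  have hz : ∀ x : ℝ, x ^ (-2 : ℤ) = (x ^ 2)⁻¹ := fun x => by
    rw [zpow_neg]; norm_cast
  simp only [hz]
  rcases Nat.eq_zero_or_pos n with hn | hn
  · subst hn; simp; positivity
  have hn' : (0:ℝ) < n := by exact_mod_cast hn
  obtain ⟨i0⟩ : Nonempty (Fin n) := ⟨⟨0, hn⟩⟩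
  have hM : 0 < M := lt_of_lt_of_le hm ((ha i0).1.trans (ha i0).2)
  have hpos : ∀ i, 0 < a i := fun i => lt_of_lt_of_le hm (ha i).1
  have key : ∀ i, a i ^ 2 + m ^ 2 * M ^ 2 * (a i ^ 2)⁻¹ ≤ m ^ 2 + M ^ 2 := by
    intro i
    have h2 : 0 < a i ^ 2 := pow_pos (hpos i) 2
    have h3 : 0 ≤ (a i ^ 2 - m ^ 2) * (M ^ 2 - a i ^ 2) :=
      mul_nonneg (by nlinarith [(ha i).1, hpos i]) (by nlinarith [(ha i).2, hpos i])
    rw [← sub_nonneg]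
    have heq : m ^ 2 + M ^ 2 - (a i ^ 2 + m ^ 2 * M ^ 2 * (a i ^ 2)⁻¹)
        = ((a i ^ 2 - m ^ 2) * (M ^ 2 - a i ^ 2)) * (a i ^ 2)⁻¹ := by
      field_simp [(hpos i).ne']
      ring
    rw [heq]
    exact mul_nonneg h3 (inv_nonneg.2 h2.le)
  set S := ∑ i, a i ^ 2 with hS
  set T := ∑ i, (a i ^ 2)⁻¹ with hT
  have hSnn : 0 ≤ S := Finset.sum_nonneg fun i _ => sq_nonneg _
  have hTnn : 0 ≤ T := Finset.sum_nonneg fun i _ => inv_nonneg.2 (sq_nonneg _)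
  have hsum : S + m ^ 2 * M ^ 2 * T ≤ n * (m ^ 2 + M ^ 2) := by
    rw [hS, hT, Finset.mul_sum, ← Finset.sum_add_distrib]
    calc ∑ i, (a i ^ 2 + m ^ 2 * M ^ 2 * (a i ^ 2)⁻¹)
        ≤ ∑ _i : Fin n, (m ^ 2 + M ^ 2) := Finset.sum_le_sum fun i _ => key i
      _ = n * (m ^ 2 + M ^ 2) := by
          rw [Finset.sum_const, Finset.card_univ, Fintype.card_fin, nsmul_eq_mul]
  set u := (1 / n : ℝ) * S with hu
  set v := (1 / n : ℝ) * T with hv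
  have hunn : 0 ≤ u := by positivity
  have hvnn : 0 ≤ v := by positivity
  have huv : u + m ^ 2 * M ^ 2 * v ≤ m ^ 2 + M ^ 2 := by
    rw [hu, hv]
    rw [show (1 / n : ℝ) * S + m ^ 2 * M ^ 2 * ((1 / n : ℝ) * T)
        = (S + m ^ 2 * M ^ 2 * T) / n by ring]
    rw [div_le_iff₀ hn']
    nlinarith [hsum]
  rw [le_div_iff₀ (by positivity : (0:ℝ) < 4 * M ^ 2 * m ^ 2)]
  have h1 : 0 ≤ u + m ^ 2 * M ^ 2 * v := by positivity
  have h2 : (u + m ^ 2 * M ^ 2 * v) ^ 2 ≤ (m ^ 2 + M ^ 2) ^ 2 := by nlinarith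
  nlinarith [sq_nonneg (u - m ^ 2 * M ^ 2 * v), h2]
end

section
/- Let a_1,...,a_n, b_1,...,b_n be real numbers with b_i > 0 and 0 < m ≤ a_i/b_i ≤ M for all i, and let w_1,...,w_n ≥ 0 be weights. Then (∑ w_k a_k²)(∑ w_k b_k²) ≤ ((M+m)²/(4mM)) (∑ w_k a_k b_k)². -/
theorem cassels_weighted (n : ℕ) (a b w : Fin n → ℝ) (m M : ℝ) (hm : 0 < m)
    (hb : ∀ i, 0 < b i) (hr : ∀ i, m ≤ a i / b i ∧ a i / b i ≤ M)
    (hw : ∀ i, 0 ≤ w i) :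
    (∑ k, w k * (a k) ^ 2) * (∑ k, w k * (b k) ^ 2) ≤
      (M + m) ^ 2 / (4 * m * M) * (∑ k, w k * (a k * b k)) ^ 2 := by
  rcases Nat.eq_zero_or_pos n with h0 | hpos
  · subst h0; simp
  · have hM : m ≤ M := by
      have := hr ⟨0, hpos⟩
      linarith [this.1, this.2]
    have hM0 : 0 < M := lt_of_lt_of_le hm hM
    have hlow : ∀ i, m * b i ≤ a i := fun i => by
      have := (hr i).1
      have hbi := hb i
      rw [le_div_iff₀ hbi] at this; linarith
    have hhigh : ∀ i, a i ≤ M * b i := fun i => by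
      have := (hr i).2
      have hbi := hb i
      rw [div_le_iff₀ hbi] at this; linarith
    set Sa := ∑ k, w k * (a k) ^ 2 with hSa
    set Sb := ∑ k, w k * (b k) ^ 2 with hSb
    set Sab := ∑ k, w k * (a k * b k) with hSab
    have key : Sa + m * M * Sb ≤ (M + m) * Sab := by
      rw [hSa, hSb, hSab, Finset.mul_sum, Finset.mul_sum, ← Finset.sum_add_distrib]
      apply Finset.sum_le_sum
      intro i _
      have h1 := hlow i
      have h2 := hhigh i
      have hwi := hw i
      nlinarith [mul_nonneg hwi (mul_nonneg (sub_nonneg.2 h2) (sub_nonneg.2 h1))]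
    have hSa0 : 0 ≤ Sa := Finset.sum_nonneg fun i _ => mul_nonneg (hw i) (sq_nonneg _)
    have hSb0 : 0 ≤ Sb := Finset.sum_nonneg fun i _ => mul_nonneg (hw i) (sq_nonneg _)
    have hSab0 : 0 ≤ Sab := Finset.sum_nonneg fun i _ =>
      mul_nonneg (hw i) (le_trans (mul_nonneg (mul_nonneg hm.le (hb i).le) (hb i).le)
        (by nlinarith [hlow i, hb i]))
    have h5 : (Sa + m * M * Sb) ^ 2 ≤ ((M + m) * Sab) ^ 2 :=
      pow_le_pow_left₀ (by positivity) key 2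
    have h4 : 4 * m * M * (Sa * Sb) ≤ ((M + m) * Sab) ^ 2 := by
      nlinarith [sq_nonneg (Sa - m * M * Sb)]
    rw [div_mul_eq_mul_div, le_div_iff₀ (by positivity)]
    nlinarith
end

section
/- Let (X, μ) be a probability measure space and f, g ∈ L²(X, μ) nonnegative with 0 ≤ m·g ≤ f ≤ M·g almost everywhere, for scalars 0 < m < M. Then (∫ f² dμ)(∫ g² dμ) ≤ ((M+m)²/(4Mm)) (∫ fg dμ)². -/
open MeasureTheory

theorem cassels_integral {X : Type*} [MeasurableSpace X] (μ : Measure X) [IsProbabilityMeasure μ]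
    (f g : X → ℝ) (m M : ℝ) (hm : 0 < m) (hmM : m < M)
    (hf : MemLp f 2 μ) (hg : MemLp g 2 μ)
    (hbound : ∀ᵐ x ∂μ, 0 ≤ g x ∧ m * g x ≤ f x ∧ f x ≤ M * g x) :
    (∫ x, (f x) ^ 2 ∂μ) * (∫ x, (g x) ^ 2 ∂μ) ≤
      (M + m) ^ 2 / (4 * M * m) * (∫ x, f x * g x ∂μ) ^ 2 := by
  have hM : 0 < M := hm.trans hmM
  have hif : Integrable (fun x => (f x) ^ 2) μ := by
    simpa [sq] using hf.integrable_sq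
  have hig : Integrable (fun x => (g x) ^ 2) μ := by
    simpa [sq] using hg.integrable_sq
  have hifg : Integrable (fun x => f x * g x) μ := by
    refine (hif.add hig).mono' (hf.aestronglyMeasurable.mul hg.aestronglyMeasurable) ?_
    filter_upwards with x
    simp only [Pi.add_apply, Real.norm_eq_abs, abs_mul]
    nlinarith [sq_nonneg (|f x| - |g x|), abs_nonneg (f x), abs_nonneg (g x),
      sq_abs (f x), sq_abs (g x)]
  have key : (∫ x, (f x) ^ 2 ∂μ) + m * M * (∫ x, (g x) ^ 2 ∂μ)
      ≤ (M + m) * (∫ x, f x * g x ∂μ) := by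
    have h := integral_mono_ae (f := fun x => f x ^ 2 + m * M * g x ^ 2)
      (g := fun x => (M + m) * (f x * g x)) (hif.add (hig.const_mul _)) (hifg.const_mul _) ?_
    · simpa [integral_add hif (hig.const_mul _), integral_const_mul] using h
    · filter_upwards [hbound] with x ⟨hg0, h1, h2⟩
      nlinarith [mul_nonneg (sub_nonneg.2 h1) (sub_nonneg.2 h2)]
  have hA : 0 ≤ ∫ x, (f x) ^ 2 ∂μ := integral_nonneg fun x => sq_nonneg _
  have hB : 0 ≤ ∫ x, (g x) ^ 2 ∂μ := integral_nonneg fun x => sq_nonneg _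
  have hC : 0 ≤ ∫ x, f x * g x ∂μ := by
    refine integral_nonneg_of_ae ?_
    filter_upwards [hbound] with x ⟨hg0, h1, h2⟩
    exact mul_nonneg (le_trans (mul_nonneg hm.le hg0) h1) hg0
  set A := ∫ x, (f x) ^ 2 ∂μ
  set B := ∫ x, (g x) ^ 2 ∂μ
  set C := ∫ x, f x * g x ∂μ
  rw [div_mul_eq_mul_div, le_div_iff₀ (by positivity)]
  have h1 : 4 * (m * M) * (A * B) ≤ (A + m * M * B) ^ 2 := by nlinarith [sq_nonneg (A - m * M * B)]
  have h2 : (A + m * M * B) ^ 2 ≤ ((M + m) * C) ^ 2 := by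
    have h0 : 0 ≤ A + m * M * B := by positivity
    nlinarith [mul_self_le_mul_self h0 key]
  nlinarith
end

section
/- Let A, B be positive invertible bounded operators on a Hilbert space H with m²A ≤ B ≤ M²A for positive reals m < M, and let Φ be a positive linear map on B(H). Then Mm·Φ(A) + Φ(B) ≤ (M+m)·Φ(A ♯ B), where A ♯ B = A^{1/2}(A^{-1/2} B A^{-1/2})^{1/2} A^{1/2} is the operator geometric mean. -/
set_option synthInstance.maxHeartbeats 1000000

open scoped NNReal

lemma key_ineq {H : Type*} [NormedAddCommGroup H] [InnerProductSpace ℂ H]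
    [CompleteSpace H] (C : H →L[ℂ] H) (hC : 0 ≤ C) (m M : ℝ) (hm : 0 < m) (hmM : m < M)
    (h1 : (m ^ 2) • (1 : H →L[ℂ] H) ≤ C) (h2 : C ≤ (M ^ 2) • (1 : H →L[ℂ] H)) :
    (M * m) • (1 : H →L[ℂ] H) + C ≤ (M + m) • CFC.sqrt C := by
  have hC' : IsSelfAdjoint C := .of_nonneg hC
  have hsm : ∀ r : ℝ, r • (1 : H →L[ℂ] H) = algebraMap ℝ _ r := fun r => by
    rw [Algebra.algebraMap_eq_smul_one]
  have hlo : ∀ x ∈ spectrum ℝ C, m ^ 2 ≤ x := by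
    rw [← algebraMap_le_iff_le_spectrum (a := C) hC', ← hsm]; exact h1
  have hhi : ∀ x ∈ spectrum ℝ C, x ≤ M ^ 2 := by
    rw [← le_algebraMap_iff_spectrum_le (a := C) hC', ← hsm]; exact h2
  have hsqrt : CFC.sqrt C = cfc Real.sqrt C := by
    rw [CFC.sqrt_eq_cfc, cfc_nnreal_eq_real NNReal.sqrt C hC]
    apply cfc_congr
    intro x hx
    have hx0 : (0:ℝ) ≤ x := le_trans (by positivity) (hlo x hx)
    simp [Real.coe_sqrt, Real.coe_toNNReal _ hx0]
  have lhs : (M * m) • (1 : H →L[ℂ] H) + C = cfc (fun x : ℝ => M * m + x) C := by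
    rw [show (fun x : ℝ => M * m + x) = (fun x : ℝ => M * m + id x) from rfl,
      cfc_const_add (M * m) id C continuousOn_id hC', cfc_id ℝ C, hsm]
  have rhs : (M + m) • CFC.sqrt C = cfc (fun x : ℝ => (M + m) * Real.sqrt x) C := by
    rw [hsqrt, ← cfc_const_mul (M + m) Real.sqrt C Real.continuous_sqrt.continuousOn]
  rw [lhs, rhs]
  rw [cfc_le_iff _ _ C (by fun_prop) (by fun_prop) hC']
  intro x hx
  have hx0 : (0:ℝ) ≤ x := le_trans (by positivity) (hlo x hx)
  have ht : Real.sqrt x ^ 2 = x := Real.sq_sqrt hx0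
  have hml : m ≤ Real.sqrt x := by
    rw [show m = Real.sqrt (m ^ 2) by rw [Real.sqrt_sq hm.le]]
    exact Real.sqrt_le_sqrt (hlo x hx)
  have hMu : Real.sqrt x ≤ M := by
    rw [show M = Real.sqrt (M ^ 2) by rw [Real.sqrt_sq (hm.trans hmM).le]]
    exact Real.sqrt_le_sqrt (hhi x hx)
  nlinarith [mul_nonneg (sub_nonneg.mpr hml) (sub_nonneg.mpr hMu)]

/-- The operator geometric mean `A ♯ B = A^{1/2} (A^{-1/2} B A^{-1/2})^{1/2} A^{1/2}`. -/
noncomputable def geoMean {H : Type*} [NormedAddCommGroup H] [InnerProductSpace ℂ H]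
    [CompleteSpace H] (A B : H →L[ℂ] H) : H →L[ℂ] H :=
  CFC.sqrt A * CFC.sqrt (Ring.inverse (CFC.sqrt A) * B * Ring.inverse (CFC.sqrt A)) * CFC.sqrt A

theorem diaz_metcalf_operator_map
    {H K : Type*} [NormedAddCommGroup H] [InnerProductSpace ℂ H] [CompleteSpace H]
    [NormedAddCommGroup K] [InnerProductSpace ℂ K] [CompleteSpace K]
    (Φ : (H →L[ℂ] H) →ₗ[ℂ] (K →L[ℂ] K)) (hΦ : ∀ T : H →L[ℂ] H, 0 ≤ T → 0 ≤ Φ T)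
    (A B : H →L[ℂ] H) (m M : ℝ) (hm : 0 < m) (hmM : m < M)
    (hA : 0 ≤ A) (hB : 0 ≤ B) (hAu : IsUnit A) (hBu : IsUnit B)
    (h₁ : m ^ 2 • A ≤ B) (h₂ : B ≤ M ^ 2 • A) :
    (M * m) • Φ A + Φ B ≤ (M + m) • Φ (geoMean A B) := by
  set S := CFC.sqrt A with hSdef
  have hS : 0 ≤ S := CFC.sqrt_nonneg _
  have hS' : IsSelfAdjoint S := .of_nonneg hS
  have hSS : S * S = A := CFC.sqrt_mul_sqrt_self A hA
  -- S is a unit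
  have hSu : IsUnit S := by
    obtain ⟨u, hu⟩ := hAu
    have e1 : (↑u⁻¹ * S) * S = 1 := by rw [mul_assoc, hSS, ← hu, Units.inv_mul]
    have e2 : S * (S * ↑u⁻¹) = 1 := by rw [← mul_assoc, hSS, ← hu, Units.mul_inv]
    have e3 : (↑u⁻¹ * S : H →L[ℂ] H) = S * ↑u⁻¹ := by
      calc (↑u⁻¹ * S : H →L[ℂ] H) = (↑u⁻¹ * S) * (S * (S * ↑u⁻¹)) := by rw [e2, mul_one]
      _ = ((↑u⁻¹ * S) * S) * (S * ↑u⁻¹) := by noncomm_ring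
      _ = S * ↑u⁻¹ := by rw [e1, one_mul]
    exact isUnit_iff_exists.mpr ⟨S * ↑u⁻¹, e2, e3 ▸ e1⟩
  set R : H →L[ℂ] H := Ring.inverse S with hRdef
  have hRS : R * S = 1 := Ring.inverse_mul_cancel S hSu
  have hSR : S * R = 1 := Ring.mul_inverse_cancel S hSu
  have hR' : IsSelfAdjoint R := by
    rw [hRdef, IsSelfAdjoint, ← Ring.inverse_star, hS'.star_eq]
  have hRAR : R * A * R = 1 := by
    rw [← hSS, show R * (S * S) * R = (R * S) * (S * R) by noncomm_ring, hRS, hSR, one_mul]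
  set C : H →L[ℂ] H := R * B * R with hCdef
  have hC : 0 ≤ C := by
    have := star_left_conjugate_nonneg hB R
    rwa [hR'.star_eq] at this
  have hconj : ∀ X Y : H →L[ℂ] H, X ≤ Y → R * X * R ≤ R * Y * R := fun X Y h => by
    have := star_left_conjugate_le_conjugate h R
    rwa [hR'.star_eq] at this
  have hconjS : ∀ X Y : H →L[ℂ] H, X ≤ Y → S * X * S ≤ S * Y * S := fun X Y h => by
    have := star_left_conjugate_le_conjugate h S
    rwa [hS'.star_eq] at this
  have h1' : (m ^ 2) • (1 : H →L[ℂ] H) ≤ C := by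
    have := hconj _ _ h₁
    rwa [mul_smul_comm, smul_mul_assoc, hRAR] at this
  have h2' : C ≤ (M ^ 2) • (1 : H →L[ℂ] H) := by
    have := hconj _ _ h₂
    rwa [mul_smul_comm, smul_mul_assoc, hRAR] at this
  have key := key_ineq C hC m M hm hmM h1' h2'
  set T : H →L[ℂ] H := CFC.sqrt C with hTdef
  have hSCS : S * C * S = B := by
    rw [hCdef, show S * (R * B * R) * S = (S * R) * B * (R * S) by noncomm_ring, hSR, hRS,
      one_mul, mul_one]
  have hGeo : geoMean A B = S * T * S := rfl
  have hmain : (M * m) • A + B ≤ (M + m) • geoMean A B := by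
    have := hconjS _ _ key
    rwa [mul_add, add_mul, mul_smul_comm, smul_mul_assoc, mul_one, hSS, hSCS,
      mul_smul_comm, smul_mul_assoc, ← hGeo] at this
  -- apply Φ
  have hsmul : ∀ (r : ℝ) (X : H →L[ℂ] H), Φ (r • X) = r • Φ X := fun r X => by
    rw [show r • X = (r : ℂ) • X by rw [← algebraMap_smul ℂ r X]; norm_num,
      map_smul, show (r : ℂ) • Φ X = r • Φ X by rw [← algebraMap_smul ℂ r (Φ X)]; norm_num]
  have := hΦ _ (sub_nonneg.mpr hmain)
  rw [map_sub, map_add, hsmul, hsmul, sub_nonneg] at this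
  exact this
end

section
/- Let A, B be positive invertible bounded operators with m²A ≤ B ≤ M²A for positive reals m < M, and let Φ be a positive linear map such that Φ(A) and Φ(B) are positive invertible. Then Φ(A) ♯ Φ(B) ≤ ((M+m)/(2√(Mm)))·Φ(A ♯ B). -/
set_option synthInstance.maxHeartbeats 1000000
set_option maxHeartbeats 1000000

section Helpers
variable {A : Type*} [CStarAlgebra A] [PartialOrder A] [StarOrderedRing A]

lemma my_sqrt_isUnit {a : A} (ha : 0 ≤ a) (hu : IsUnit a) : IsUnit (CFC.sqrt a) := by
  obtain ⟨u, hu'⟩ := hu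
  have hss : CFC.sqrt a * CFC.sqrt a = a := CFC.sqrt_mul_sqrt_self a ha
  have hcomm : Commute (CFC.sqrt a) a := by
    conv_rhs => rw [← hss]
    exact (Commute.refl (CFC.sqrt a)).mul_right (Commute.refl _)
  have hcu : Commute (CFC.sqrt a) (↑u : A) := by rw [hu']; exact hcomm
  have hcinv := hcu.units_inv_right
  refine ⟨⟨CFC.sqrt a, CFC.sqrt a * ↑u⁻¹, ?_, ?_⟩, rfl⟩
  · rw [← mul_assoc, hss, ← hu']
    exact u.mul_inv
  · rw [mul_assoc, ← hcinv.eq, ← mul_assoc, hss, ← hu']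
    exact u.mul_inv


/-- `√T + √T ≤ t•1 + t⁻¹•T` for `t > 0`, `T ≥ 0`. -/
lemma my_sqrt_amgm {T : A} (hT : 0 ≤ T) {t : ℝ} (ht : 0 < t) :
    CFC.sqrt T + CFC.sqrt T ≤ t • 1 + t⁻¹ • T := by
  set s := CFC.sqrt T with hs
  have hsnn : 0 ≤ s := CFC.sqrt_nonneg (a := T)
  have hssa : IsSelfAdjoint s := .of_nonneg hsnn
  set c : A := Real.sqrt t • 1 - Real.sqrt t⁻¹ • s with hc
  have hcsa : star c = c := by
    simp [hc, star_smul, hssa.star_eq]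
  have h0 := star_mul_self_nonneg c
  rw [hcsa] at h0
  have hexp : c * c = (t • 1 + t⁻¹ • T) - (s + s) := by
    have h1 : s * s = T := CFC.sqrt_mul_sqrt_self T hT
    have h2 : Real.sqrt t * Real.sqrt t = t := Real.mul_self_sqrt ht.le
    have h3 : Real.sqrt t⁻¹ * Real.sqrt t⁻¹ = t⁻¹ := Real.mul_self_sqrt (by positivity)
    have h4 : Real.sqrt t * Real.sqrt t⁻¹ = 1 := by
      rw [← Real.sqrt_mul ht.le, mul_inv_cancel₀ ht.ne', Real.sqrt_one]
    have h5 : Real.sqrt t⁻¹ * Real.sqrt t = 1 := by rw [mul_comm]; exact h4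
    rw [hc, sub_mul, mul_sub, mul_sub, smul_mul_smul_comm, smul_mul_smul_comm,
      smul_mul_smul_comm, smul_mul_smul_comm, h1, h2, h3, h4, h5, one_mul, mul_one, one_mul,
      one_smul]
    abel
  rw [hexp, sub_nonneg] at h0
  exact h0

end Helpers

section Helpers2
variable {A : Type*} [CStarAlgebra A] [PartialOrder A] [StarOrderedRing A]

lemma my_geo_amgm {X Y : A} (hX : 0 ≤ X) (hY : 0 ≤ Y) (hXu : IsUnit X) {t : ℝ} (ht : 0 < t) :
    CFC.sqrt X * CFC.sqrt (Ring.inverse (CFC.sqrt X) * Y * Ring.inverse (CFC.sqrt X)) * CFC.sqrt X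
      + CFC.sqrt X * CFC.sqrt (Ring.inverse (CFC.sqrt X) * Y * Ring.inverse (CFC.sqrt X))
        * CFC.sqrt X ≤ t • X + t⁻¹ • Y := by
  set s := CFC.sqrt X with hs
  have hsnn : 0 ≤ s := CFC.sqrt_nonneg (a := X)
  have hssa : IsSelfAdjoint s := .of_nonneg hsnn
  have hsu : IsUnit s := my_sqrt_isUnit hX hXu
  set si := Ring.inverse s with hsi
  have hsi_star : star si = si := by
    rw [hsi, ← Ring.inverse_star, hssa.star_eq]
  set T := si * Y * si with hTdef
  have hT : 0 ≤ T := by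
    have := star_left_conjugate_nonneg hY si
    rwa [hsi_star] at this
  have key := my_sqrt_amgm hT ht
  have conj := star_left_conjugate_le_conjugate key s
  rw [hssa.star_eq] at conj
  have hss : s * s = X := CFC.sqrt_mul_sqrt_self X hX
  have hsisi : s * T * s = Y := by
    rw [hTdef, ← mul_assoc, ← mul_assoc, Ring.mul_inverse_cancel _ hsu, one_mul, mul_assoc,
      Ring.inverse_mul_cancel _ hsu, mul_one]
  calc s * CFC.sqrt T * s + s * CFC.sqrt T * s
      = s * (CFC.sqrt T + CFC.sqrt T) * s := by rw [mul_add, add_mul]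
    _ ≤ s * (t • 1 + t⁻¹ • T) * s := conj
    _ = t • X + t⁻¹ • Y := by
        rw [mul_add, add_mul, mul_smul_comm, smul_mul_assoc, mul_one, hss,
          mul_smul_comm, smul_mul_assoc, mul_assoc, ← mul_assoc s T s, hsisi]

lemma my_chord {C : A} (hC : 0 ≤ C) {m M : ℝ} (hm : 0 < m) (hmM : m < M)
    (h1 : m ^ 2 • (1 : A) ≤ C) (h2 : C ≤ M ^ 2 • (1 : A)) :
    (M * m) • (1 : A) + C ≤ (M + m) • CFC.sqrt C := by
  have hCsa : IsSelfAdjoint C := .of_nonneg hC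
  have hM : (0:ℝ) < M := hm.trans hmM
  rw [← Algebra.algebraMap_eq_smul_one] at h1 h2
  have hsp : ∀ x ∈ spectrum ℝ C, m ^ 2 ≤ x ∧ x ≤ M ^ 2 := fun x hx =>
    ⟨(algebraMap_le_iff_le_spectrum hCsa).mp h1 x hx,
     (le_algebraMap_iff_spectrum_le hCsa).mp h2 x hx⟩
  have e1 : cfc (fun x : ℝ => M * m + x) C = (M * m) • (1 : A) + C := by
    rw [cfc_add (a := C) (fun _ => M * m) (fun x => x) (by fun_prop) (by fun_prop),
      cfc_const _ _, cfc_id' ℝ C, Algebra.algebraMap_eq_smul_one]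
  have esqrt : CFC.sqrt C = cfc Real.sqrt C := by
    rw [CFC.sqrt_eq_cfc, cfc_nnreal_eq_real _ C hC]
    apply cfc_congr
    intro x hx
    rw [Real.sqrt]
  have e2 : cfc (fun x : ℝ => (M + m) * Real.sqrt x) C = (M + m) • CFC.sqrt C := by
    rw [cfc_const_mul _ _ _ (by fun_prop), esqrt]
  rw [← e1, ← e2]
  rw [cfc_le_iff _ _ C (by fun_prop) (by fun_prop) hCsa]
  intro x hx
  obtain ⟨hxl, hxu⟩ := hsp x hx
  have hx0 : (0:ℝ) ≤ x := le_trans (by positivity) hxl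
  have hsq : Real.sqrt x ^ 2 = x := Real.sq_sqrt hx0
  have hml : m ≤ Real.sqrt x := by
    rw [show m = Real.sqrt (m ^ 2) from (Real.sqrt_sq hm.le).symm]
    exact Real.sqrt_le_sqrt hxl
  have hMu : Real.sqrt x ≤ M := by
    rw [show M = Real.sqrt (M ^ 2) from (Real.sqrt_sq hM.le).symm]
    exact Real.sqrt_le_sqrt hxu
  nlinarith [hsq, hml, hMu]

end Helpers2

section Helpers3
variable {A : Type*} [CStarAlgebra A] [PartialOrder A] [StarOrderedRing A]

lemma my_chord_conj {X Y : A} (hX : 0 ≤ X) (hY : 0 ≤ Y) (hXu : IsUnit X) {m M : ℝ}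
    (hm : 0 < m) (hmM : m < M) (h1 : m ^ 2 • X ≤ Y) (h2 : Y ≤ M ^ 2 • X) :
    (M * m) • X + Y ≤ (M + m) •
      (CFC.sqrt X * CFC.sqrt (Ring.inverse (CFC.sqrt X) * Y * Ring.inverse (CFC.sqrt X))
        * CFC.sqrt X) := by
  set s := CFC.sqrt X with hs
  have hsnn : 0 ≤ s := CFC.sqrt_nonneg (a := X)
  have hssa : IsSelfAdjoint s := .of_nonneg hsnn
  have hsu : IsUnit s := my_sqrt_isUnit hX hXu
  set si := Ring.inverse s with hsi
  have hsi_star : star si = si := by rw [hsi, ← Ring.inverse_star, hssa.star_eq]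
  set T := si * Y * si with hTdef
  have hT : 0 ≤ T := by
    have := star_left_conjugate_nonneg hY si
    rwa [hsi_star] at this
  have hss : s * s = X := CFC.sqrt_mul_sqrt_self X hX
  have hone : si * X * si = 1 := by
    rw [← hss, ← mul_assoc si s s, mul_assoc (si * s) s si,
      Ring.inverse_mul_cancel _ hsu, one_mul, Ring.mul_inverse_cancel _ hsu]
  have hT1 : m ^ 2 • (1 : A) ≤ T := by
    have := star_left_conjugate_le_conjugate h1 si
    rw [hsi_star] at this
    calc m ^ 2 • (1 : A) = m ^ 2 • (si * X * si) := by rw [hone]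
      _ = si * (m ^ 2 • X) * si := by simp only [mul_smul_comm, smul_mul_assoc]
      _ ≤ si * Y * si := this
  have hT2 : T ≤ M ^ 2 • (1 : A) := by
    have := star_left_conjugate_le_conjugate h2 si
    rw [hsi_star] at this
    calc T ≤ si * (M ^ 2 • X) * si := this
      _ = M ^ 2 • (si * X * si) := by simp only [mul_smul_comm, smul_mul_assoc]
      _ = M ^ 2 • (1 : A) := by rw [hone]
  have key := my_chord hT hm hmM hT1 hT2
  have conj := star_left_conjugate_le_conjugate key s
  rw [hssa.star_eq] at conj
  have hsisi : s * T * s = Y := by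
    rw [hTdef, ← mul_assoc, ← mul_assoc, Ring.mul_inverse_cancel _ hsu, one_mul, mul_assoc,
      Ring.inverse_mul_cancel _ hsu, mul_one]
  calc (M * m) • X + Y = s * ((M * m) • (1 : A) + T) * s := by
        rw [mul_add, add_mul, mul_smul_comm, smul_mul_assoc, mul_one, hss, mul_assoc,
          ← mul_assoc s T s, hsisi]
    _ ≤ s * ((M + m) • CFC.sqrt T) * s := conj
    _ = (M + m) • (s * CFC.sqrt T * s) := by rw [mul_smul_comm, smul_mul_assoc]

end Helpers3

theorem cassels_operator
    {H K : Type*} [NormedAddCommGroup H] [InnerProductSpace ℂ H] [CompleteSpace H]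
    [NormedAddCommGroup K] [InnerProductSpace ℂ K] [CompleteSpace K]
    (Φ : (H →L[ℂ] H) →ₗ[ℂ] (K →L[ℂ] K)) (hΦ : ∀ T : H →L[ℂ] H, 0 ≤ T → 0 ≤ Φ T)
    (A B : H →L[ℂ] H) (m M : ℝ) (hm : 0 < m) (hmM : m < M)
    (hA : 0 ≤ A) (hB : 0 ≤ B) (hAu : IsUnit A) (hBu : IsUnit B)
    (hΦA : IsUnit (Φ A)) (hΦB : IsUnit (Φ B))
    (h₁ : m ^ 2 • A ≤ B) (h₂ : B ≤ M ^ 2 • A) :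
    geoMean (Φ A) (Φ B) ≤ ((M + m) / (2 * Real.sqrt (M * m))) • Φ (geoMean A B) := by
  have hM : (0:ℝ) < M := hm.trans hmM
  have hMm : (0:ℝ) < M * m := mul_pos hM hm
  set t := Real.sqrt (M * m) with htdef
  have ht : 0 < t := Real.sqrt_pos.mpr hMm
  have ht2 : t * t = M * m := Real.mul_self_sqrt hMm.le
  have hΦA0 : 0 ≤ Φ A := hΦ A hA
  have hΦB0 : 0 ≤ Φ B := hΦ B hB
  have hmono : ∀ X Y : H →L[ℂ] H, X ≤ Y → Φ X ≤ Φ Y := fun X Y h => by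
    have h' := hΦ _ (sub_nonneg.mpr h)
    rw [map_sub] at h'
    exact sub_nonneg.mp h'
  have hsmul : ∀ (r : ℝ) (X : H →L[ℂ] H), Φ (r • X) = r • Φ X := fun r X => by
    rw [← Complex.coe_smul, map_smul, Complex.coe_smul]
  have step1 : geoMean (Φ A) (Φ B) + geoMean (Φ A) (Φ B) ≤ t • Φ A + t⁻¹ • Φ B := by
    unfold geoMean
    exact my_geo_amgm hΦA0 hΦB0 hΦA ht
  have step2 : (M * m) • A + B ≤ (M + m) • geoMean A B := by
    unfold geoMean
    exact my_chord_conj hA hB hAu hm hmM h₁ h₂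
  have step3 : (M * m) • Φ A + Φ B ≤ (M + m) • Φ (geoMean A B) := by
    have h' := hmono _ _ step2
    rwa [map_add, hsmul, hsmul] at h'
  have step4 : t • Φ A + t⁻¹ • Φ B = t⁻¹ • ((M * m) • Φ A + Φ B) := by
    rw [smul_add, smul_smul]
    congr 2
    field_simp
    nlinarith [ht2]
  rw [step4] at step1
  have step5 := step1.trans (smul_le_smul_of_nonneg_left step3 (by positivity : (0:ℝ) ≤ t⁻¹))
  rw [← two_smul ℝ (geoMean (Φ A) (Φ B))] at step5
  have step6 := smul_le_smul_of_nonneg_left step5 (by norm_num : (0:ℝ) ≤ 1/2)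
  simp only [smul_smul] at step6
  calc geoMean (Φ A) (Φ B) = ((1/2 : ℝ) * 2) • geoMean (Φ A) (Φ B) := by norm_num
    _ ≤ ((1/2 : ℝ) * (t⁻¹ * (M + m))) • Φ (geoMean A B) := step6
    _ = ((M + m) / (2 * t)) • Φ (geoMean A B) := by
        congr 1
        field_simp
end

section
/- Let A be a positive invertible operator with 0 < m ≤ A ≤ M and let Φ be a unital positive linear map such that Φ(A) and Φ(A^{-1}) are invertible. Then Φ(A) ♯ Φ(A^{-1}) ≤ (M² + m²)/(2Mm) · I. -/
set_option synthInstance.maxHeartbeats 1000000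
set_option maxHeartbeats 1000000

section aux
variable {A : Type*} [CStarAlgebra A] [PartialOrder A] [StarOrderedRing A]

lemma sqrt_eq_real_cfc' (a : A) (ha : 0 ≤ a) : CFC.sqrt a = cfc Real.sqrt a := by
  rw [CFC.sqrt_eq_iff a _ ha (cfc_nonneg fun x _ => Real.sqrt_nonneg x)]
  rw [← cfc_mul ..]
  conv_rhs => rw [← cfc_id ℝ a]
  exact cfc_congr fun x hx => Real.mul_self_sqrt (spectrum_nonneg_of_nonneg ha hx)

lemma sqrt_isUnit' (a : A) (ha : 0 ≤ a) (hu : IsUnit a) : IsUnit (CFC.sqrt a) := by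
  have h0 : (0:ℝ) ∉ spectrum ℝ a := spectrum.zero_notMem ℝ hu
  have hnz : ∀ x ∈ spectrum ℝ a, Real.sqrt x ≠ 0 := fun x hx => by
    have hx0 : 0 ≤ x := spectrum_nonneg_of_nonneg ha hx
    have hne : x ≠ 0 := fun h => h0 (h ▸ hx)
    positivity
  rw [sqrt_eq_real_cfc' a ha]
  exact isUnit_cfc Real.sqrt a Real.continuous_sqrt.continuousOn (.of_nonneg ha) hnz

lemma geo_key (P Q : A) (hP : 0 ≤ P) (hQ : 0 ≤ Q) (hPu : IsUnit P) (c : ℝ) (hc : 0 < c) :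
    CFC.sqrt P * CFC.sqrt (Ring.inverse (CFC.sqrt P) * Q * Ring.inverse (CFC.sqrt P)) * CFC.sqrt P
      ≤ (c/2) • P + (1/(2*c)) • Q := by
  set R := CFC.sqrt P with hR
  have hRnn : 0 ≤ R := CFC.sqrt_nonneg P
  have hRsa : IsSelfAdjoint R := .of_nonneg hRnn
  have hRu : IsUnit R := sqrt_isUnit' P hP hPu
  set Ri := Ring.inverse R with hRi
  have hRisa : star Ri = Ri := by rw [hRi, ← Ring.inverse_star, hRsa.star_eq]
  set X := Ri * Q * Ri with hX
  have hXnn : 0 ≤ X := by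
    have := star_left_conjugate_nonneg hQ Ri
    rwa [hRisa] at this
  have hsqX : CFC.sqrt X ≤ (c/2) • 1 + (1/(2*c)) • X := by
    rw [sqrt_eq_real_cfc' X hXnn]
    calc cfc Real.sqrt X ≤ cfc (fun t : ℝ => c/2 + (1/(2*c)) * t) X := by
          refine cfc_mono fun x hx => ?_
          have hx0 : 0 ≤ x := spectrum_nonneg_of_nonneg hXnn hx
          have h2c : (0:ℝ) < 2*c := by linarith
          have key : 2*c*Real.sqrt x ≤ c*c + x := by
            nlinarith [sq_nonneg (Real.sqrt x - c), Real.sq_sqrt hx0, Real.sqrt_nonneg x]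
          calc Real.sqrt x = (2*c*Real.sqrt x)/(2*c) := by field_simp
            _ ≤ (c*c+x)/(2*c) := by gcongr
            _ = c/2 + (1/(2*c))*x := by field_simp
      _ = (c/2) • 1 + (1/(2*c)) • X := by
          rw [cfc_add .., cfc_const _ _, cfc_const_mul .., cfc_id' ℝ X,
            Algebra.algebraMap_eq_smul_one]
  have hconj := hRsa.conjugate_le_conjugate hsqX
  refine hconj.trans_eq ?_
  rw [mul_add, add_mul, mul_smul_comm, mul_smul_comm, smul_mul_assoc, smul_mul_assoc,
    mul_one, CFC.sqrt_mul_sqrt_self P hP]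
  congr 1
  rw [hX, ← mul_assoc, ← mul_assoc, Ring.mul_inverse_cancel R hRu, one_mul,
    mul_assoc, Ring.inverse_mul_cancel R hRu, mul_one]

end aux

theorem kantorovich_operator
    {H K : Type*} [NormedAddCommGroup H] [InnerProductSpace ℂ H] [CompleteSpace H]
    [NormedAddCommGroup K] [InnerProductSpace ℂ K] [CompleteSpace K]
    (Φ : (H →L[ℂ] H) →ₗ[ℂ] (K →L[ℂ] K)) (hΦ : ∀ T : H →L[ℂ] H, 0 ≤ T → 0 ≤ Φ T)
    (hunital : Φ 1 = 1)
    (A : H →L[ℂ] H) (m M : ℝ) (hm : 0 < m) (hmM : m < M)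
    (hA : 0 ≤ A) (hAu : IsUnit A)
    (h₁ : m • (1 : H →L[ℂ] H) ≤ A) (h₂ : A ≤ M • (1 : H →L[ℂ] H))
    (hΦA : IsUnit (Φ A)) (hΦAinv : IsUnit (Φ (Ring.inverse A))) :
    geoMean (Φ A) (Φ (Ring.inverse A)) ≤
      ((M ^ 2 + m ^ 2) / (2 * M * m)) • (1 : K →L[ℂ] K) := by
  have hsa : IsSelfAdjoint A := .of_nonneg hA
  have hlow : ∀ x ∈ spectrum ℝ A, m ≤ x := by
    refine (algebraMap_le_iff_le_spectrum (R := ℝ) hsa).mp ?_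
    rwa [Algebra.algebraMap_eq_smul_one]
  have hhigh : ∀ x ∈ spectrum ℝ A, x ≤ M := by
    refine (le_algebraMap_iff_spectrum_le (R := ℝ) hsa).mp ?_
    rwa [Algebra.algebraMap_eq_smul_one]
  have hne : ∀ x ∈ spectrum ℝ A, x ≠ 0 := fun x hx =>
    (lt_of_lt_of_le hm (hlow x hx)).ne'
  have hcinv : ContinuousOn (fun t : ℝ => t⁻¹) (spectrum ℝ A) :=
    ContinuousOn.inv₀ continuousOn_id hne
  have hAinv_eq : Ring.inverse A = cfc (fun t : ℝ => t⁻¹) A := by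
    have h := cfc_inv_id (R := ℝ) hAu.unit (by rw [hAu.unit_spec]; exact hsa)
    rw [hAu.unit_spec] at h
    rw [← hAu.unit_spec, Ring.inverse_unit, ← h, hAu.unit_spec]
  have hQnn : 0 ≤ Ring.inverse A := by
    rw [hAinv_eq]
    exact cfc_nonneg fun x hx => inv_nonneg.2 (le_trans hm.le (hlow x hx))
  -- key operator inequality
  have key1 : A + (M*m) • Ring.inverse A ≤ (M+m) • (1 : H →L[ℂ] H) := by
    have e1 : cfc (fun t : ℝ => t + (M*m) * t⁻¹) A = A + (M*m) • Ring.inverse A := by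
      rw [cfc_add A (fun t : ℝ => t) (fun t : ℝ => (M*m) * t⁻¹) (by fun_prop) (continuousOn_const.mul hcinv),
        cfc_id' ℝ A, cfc_const_mul _ _ A hcinv, hAinv_eq]
    rw [← e1]
    calc cfc (fun t : ℝ => t + (M*m) * t⁻¹) A
        ≤ cfc (fun _ : ℝ => M + m) A := by
          refine cfc_mono fun x hx => ?_
          have hmx := hlow x hx
          have hxM := hhigh x hx
          have hx0 : (0:ℝ) < x := lt_of_lt_of_le hm hmx
          have e : x + M*m*x⁻¹ = (x^2 + M*m)/x := by field_simp
          rw [e, div_le_iff₀ hx0]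
          nlinarith [mul_nonneg (sub_nonneg.2 hxM) (sub_nonneg.2 hmx)]
      _ = (M+m) • 1 := by rw [cfc_const _ _ hsa, Algebra.algebraMap_eq_smul_one]
  -- push through Φ
  have key2 : Φ A + (M*m) • Φ (Ring.inverse A) ≤ (M+m) • (1 : K →L[ℂ] K) := by
    have h := hΦ _ (sub_nonneg.2 key1)
    rw [map_sub, map_add, LinearMap.map_smul_of_tower, LinearMap.map_smul_of_tower,
      hunital] at h
    exact sub_nonneg.1 h
  -- geometric mean bound
  set s := Real.sqrt (M*m) with hsdef
  have hMm : (0:ℝ) < M*m := mul_pos (hm.trans hmM) hm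
  have hs : 0 < s := Real.sqrt_pos.2 hMm
  have hs2 : s*s = M*m := Real.mul_self_sqrt hMm.le
  have hs0 : s ≠ 0 := hs.ne'
  have hgeo := geo_key (Φ A) (Φ (Ring.inverse A)) (hΦ A hA) (hΦ _ hQnn) hΦA (1/s)
    (one_div_pos.2 hs)
  have e2 : ((1/s)/2) • (Φ A) + (1/(2*(1/s))) • (Φ (Ring.inverse A))
      = (1/(2*s)) • (Φ A + (M*m) • Φ (Ring.inverse A)) := by
    have c1 : (1/s)/2 = 1/(2*s) := by field_simp
    have c2 : (1:ℝ)/(2*(1/s)) = 1/(2*s) * (M*m) := by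
      rw [← hs2]; field_simp
    rw [smul_add, smul_smul, c1, c2]
  have step : geoMean (Φ A) (Φ (Ring.inverse A)) ≤ (1/(2*s)) • ((M+m) • (1 : K →L[ℂ] K)) := by
    refine (hgeo.trans_eq e2).trans ?_
    exact smul_le_smul_of_nonneg_left key2 (le_of_lt (one_div_pos.2 (by linarith)))
  rw [smul_smul] at step
  refine step.trans ?_
  have h1 : (0 : K →L[ℂ] K) ≤ 1 := by simpa using star_mul_self_nonneg (1 : K →L[ℂ] K)
  refine smul_le_smul_of_nonneg_right ?_ h1
  rw [div_mul_eq_mul_div, one_mul, div_le_div_iff₀ (by linarith : (0:ℝ) < 2*s) (by nlinarith : (0:ℝ) < 2*M*m)]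
  nlinarith [mul_nonneg hs.le (sq_nonneg (2*s - M - m)), mul_nonneg hs.le (sq_nonneg (M - m)),
    hs2, hs.le, sq_nonneg (M - m)]
end

section
/- Let Ψ be a unital positive linear map on B(H) and X a self-adjoint operator with 0 < m ≤ X ≤ M. Then Ψ(X²) − Ψ(X)² ≤ ((M − m)²/4)·I. -/
set_option synthInstance.maxHeartbeats 1000000
set_option maxHeartbeats 1000000

theorem kantorovich_difference
    {H : Type*} [NormedAddCommGroup H] [InnerProductSpace ℂ H] [CompleteSpace H]
    (Ψ : (H →L[ℂ] H) →ₗ[ℂ] (H →L[ℂ] H)) (hΨ : ∀ T : H →L[ℂ] H, 0 ≤ T → 0 ≤ Ψ T)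
    (hunital : Ψ 1 = 1)
    (X : H →L[ℂ] H) (hX : IsSelfAdjoint X) (m M : ℝ) (hm : 0 < m)
    (h₁ : m • (1 : H →L[ℂ] H) ≤ X) (h₂ : X ≤ M • (1 : H →L[ℂ] H)) :
    Ψ (X ^ 2) - (Ψ X) ^ 2 ≤ ((M - m) ^ 2 / 4) • (1 : H →L[ℂ] H) := by
  -- spectrum bounds
  have hsub1 : (0 : H →L[ℂ] H) ≤ X - algebraMap ℝ (H →L[ℂ] H) m := by
    rw [sub_nonneg, Algebra.algebraMap_eq_smul_one]; exact h₁
  have hsub2 : (0 : H →L[ℂ] H) ≤ algebraMap ℝ (H →L[ℂ] H) M - X := by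
    rw [sub_nonneg, Algebra.algebraMap_eq_smul_one]; exact h₂
  have hspec : ∀ x ∈ spectrum ℝ X, m ≤ x ∧ x ≤ M := by
    intro x hx
    constructor
    · have hmem : x - m ∈ spectrum ℝ (X - algebraMap ℝ (H →L[ℂ] H) m) := by
        rw [← spectrum.sub_singleton_eq]
        exact Set.sub_mem_sub hx rfl
      have := spectrum_nonneg_of_nonneg hsub1 hmem
      linarith
    · have hmem : M - x ∈ spectrum ℝ (algebraMap ℝ (H →L[ℂ] H) M - X) := by
        rw [← spectrum.singleton_sub_eq]
        exact Set.sub_mem_sub rfl hx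
      have := spectrum_nonneg_of_nonneg hsub2 hmem
      linarith
  -- key operator inequality via CFC
  have e1 : cfc (fun t : ℝ => M - t) X = M • (1 : H →L[ℂ] H) - X := by
    rw [cfc_sub _ _ X (by fun_prop) (by fun_prop), cfc_const M X hX, cfc_id' ℝ X hX,
      Algebra.algebraMap_eq_smul_one]
  have e2 : cfc (fun t : ℝ => t - m) X = X - m • (1 : H →L[ℂ] H) := by
    rw [cfc_sub _ _ X (by fun_prop) (by fun_prop), cfc_const m X hX, cfc_id' ℝ X hX,
      Algebra.algebraMap_eq_smul_one]
  have hprod : (0 : H →L[ℂ] H) ≤ (M • (1 : H →L[ℂ] H) - X) * (X - m • (1 : H →L[ℂ] H)) := by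
    rw [← e1, ← e2, ← cfc_mul _ _ X (by fun_prop) (by fun_prop)]
    refine cfc_nonneg fun x hx => ?_
    obtain ⟨hxm, hxM⟩ := hspec x hx
    nlinarith
  have hkey : X ^ 2 ≤ (M + m) • X - (M * m) • (1 : H →L[ℂ] H) := by
    rw [← sub_nonneg]
    have expand : (M + m) • X - (M * m) • (1 : H →L[ℂ] H) - X ^ 2
        = (M • (1 : H →L[ℂ] H) - X) * (X - m • (1 : H →L[ℂ] H)) := by
      simp only [pow_two, mul_sub, sub_mul, smul_mul_assoc, mul_smul_comm, mul_one, one_mul,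
        smul_smul]
      module
    rw [expand]; exact hprod
  -- positivity of X and of Ψ X
  have hX0 : (0 : H →L[ℂ] H) ≤ X :=
    le_trans (smul_nonneg hm.le zero_le_one) h₁
  have hY : IsSelfAdjoint (Ψ X) := IsSelfAdjoint.of_nonneg (hΨ X hX0)
  -- monotonicity of Ψ
  have mono : ∀ S T : H →L[ℂ] H, S ≤ T → Ψ S ≤ Ψ T := by
    intro S T h
    have := hΨ (T - S) (sub_nonneg.2 h)
    rwa [map_sub, sub_nonneg] at this
  have hkey2 : Ψ (X ^ 2) ≤ (M + m) • Ψ X - (M * m) • (1 : H →L[ℂ] H) := by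
    have := mono _ _ hkey
    rwa [map_sub, LinearMap.map_smul_of_tower, LinearMap.map_smul_of_tower, hunital] at this
  -- square is nonneg
  have hsa : IsSelfAdjoint (Ψ X - ((M + m) / 2) • (1 : H →L[ℂ] H)) := by
    refine hY.sub ?_
    rw [IsSelfAdjoint, star_smul, star_one, star_trivial]
  have sq : (0 : H →L[ℂ] H) ≤ (Ψ X - ((M + m) / 2) • (1 : H →L[ℂ] H)) ^ 2 := by
    rw [pow_two]; exact hsa.mul_self_nonneg
  -- conclude
  have step : Ψ (X ^ 2) - (Ψ X) ^ 2 ≤ ((M + m) • Ψ X - (M * m) • (1 : H →L[ℂ] H)) - (Ψ X) ^ 2 :=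
    sub_le_sub_right hkey2 _
  refine step.trans ?_
  rw [← sub_nonneg]
  have ident : ((M - m) ^ 2 / 4) • (1 : H →L[ℂ] H) - (((M + m) • Ψ X - (M * m) • (1 : H →L[ℂ] H)) - (Ψ X) ^ 2)
      = (Ψ X - ((M + m) / 2) • (1 : H →L[ℂ] H)) ^ 2 := by
    simp only [pow_two, mul_sub, sub_mul, smul_mul_assoc, mul_smul_comm, mul_one, one_mul,
      smul_smul]
    module
  rw [ident]; exact sq
end

section
/- Let a_1,...,a_n and b_1,...,b_n be real numbers with 0 ≤ m_1 ≤ a_i ≤ M_1 and 0 ≤ m_2 ≤ b_i ≤ M_2 for all i. Then (∑ a_i²)(∑ b_i²) − (∑ a_i b_i)² ≤ (n²/3)(M_1 M_2 − m_1 m_2)². -/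
-- Homogeneous G1: p,q ∈ [0,1] scalars, x ∈ [0,Np], y ∈ [0,Nq], qx+py ≤ Npq
lemma G1H (N p q x y : ℝ) (hp0 : 0 ≤ p) (hp1 : p ≤ 1) (hq0 : 0 ≤ q) (hq1 : q ≤ 1)
    (hx0 : 0 ≤ x) (hxp : x ≤ N*p) (hy0 : 0 ≤ y) (hyq : y ≤ N*q)
    (hside : q*x + p*y ≤ N*(p*q)) :
    (N - (2-p)*x) * (N - (2-q)*y) - (N - x - y)^2 ≤ N^2 * (p+q-p*q)^2 / 3 := by
  -- W := N²pq − 3xy ≥ 0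
  have hxy : 0 ≤ x*y := mul_nonneg hx0 hy0
  have hW : 3*(x*y) ≤ N^2*(p*q) := by
    rcases eq_or_lt_of_le (mul_nonneg hp0 hq0) with h | h
    · have : x = 0 ∨ y = 0 := by
        rcases mul_eq_zero.1 h.symm with h0 | h0
        · exact Or.inl (le_antisymm (by simpa [h0] using hxp) hx0)
        · exact Or.inr (le_antisymm (by simpa [h0] using hyq) hy0)
      rcases this with h0 | h0 <;> simp [h0] <;> nlinarith [sq_nonneg N]
    · have hs0 : 0 ≤ q*x + p*y := by positivity
      have hsq : (q*x + p*y)*(q*x + p*y) ≤ (N*(p*q))*(N*(p*q)) := mul_self_le_mul_self hs0 hside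
      nlinarith [sq_nonneg (q*x - p*y), mul_nonneg (mul_nonneg hq0 hx0) (mul_nonneg hp0 hy0),
        mul_pos h h, mul_nonneg (le_of_lt h) hxy]
  have hX : 0 ≤ 3*x^2 - 3*(N*p)*x + (N*p)^2 := by nlinarith [sq_nonneg (2*x - N*p), sq_nonneg (N*p)]
  have hY : 0 ≤ 3*y^2 - 3*(N*q)*y + (N*q)^2 := by nlinarith [sq_nonneg (2*y - N*q), sq_nonneg (N*q)]
  have key : N^2*(p*q) - 3*(x*y) ≤ (3*x^2 - 3*(N*p)*x + (N*p)^2) + (3*y^2 - 3*(N*q)*y + (N*q)^2) := by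
    nlinarith [sq_nonneg (3*(x*y) - 2*(N*q)*x - 2*(N*p)*y + (N*p)*(N*q)),
      sq_nonneg ((3*x^2 - 3*(N*p)*x + (N*p)^2) - (3*y^2 - 3*(N*q)*y + (N*q)^2)), hX, hY, hW]
  have hg1 : -1 ≤ 2-2*p-2*q+p*q := by nlinarith [mul_nonneg (sub_nonneg.2 hp1) (sub_nonneg.2 hq1)]
  rcases le_or_gt 0 (2-2*p-2*q+p*q) with hg | hg
  · nlinarith [hX, hY, mul_nonneg hg (by linarith : (0:ℝ) ≤ N^2*(p*q) - 3*(x*y))]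
  · have h1 : 0 ≤ (2-2*p-2*q+p*q + 1) * (N^2*(p*q) - 3*(x*y)) :=
      mul_nonneg (by linarith) (by linarith)
    nlinarith [key, h1]

lemma G2H (N p q x y : ℝ) (hp0 : 0 ≤ p) (hp1 : p ≤ 1) (hq0 : 0 ≤ q) (hq1 : q ≤ 1)
    (hx0 : 0 ≤ x) (hxp : x ≤ N*p) (hy0 : 0 ≤ y) (hyq : y ≤ N*q)
    (hside : N*(p*q) ≤ q*x + p*y) :
    (N - (2-p)*x) * (N - (2-q)*y) - (N - x - y + (q*x + p*y - N*(p*q)))^2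
      ≤ N^2 * (p+q-p*q)^2 / 3 := by
  have h1 := G1H N p q (N*p - x) (N*q - y) hp0 hp1 hq0 hq1
    (by linarith) (by linarith) (by linarith) (by linarith)
    (by nlinarith)
  have hcorr : 0 ≤ (q*x + p*y - N*(p*q)) * ((2-q)*(N*p-x) + (2-p)*(N*q-y)) := by
    apply mul_nonneg (by linarith)
    have := mul_nonneg (by linarith : (0:ℝ) ≤ 2-q) (by linarith : (0:ℝ) ≤ N*p-x)
    have := mul_nonneg (by linarith : (0:ℝ) ≤ 2-p) (by linarith : (0:ℝ) ≤ N*q-y)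
    linarith
  nlinarith [h1, hcorr]

lemma core (n : ℕ) (a b : Fin n → ℝ) (u v : ℝ) (hu0 : 0 ≤ u) (hv0 : 0 ≤ v)
    (hu1 : u ≤ 1) (hv1 : v ≤ 1)
    (ha : ∀ i, u ≤ a i ∧ a i ≤ 1) (hb : ∀ i, v ≤ b i ∧ b i ≤ 1) :
    (∑ i, (a i)^2) * (∑ i, (b i)^2) - (∑ i, a i * b i)^2 ≤ ((n:ℝ)^2/3) * (1 - u*v)^2 := by
  set N : ℝ := (n : ℝ) with hN
  set A := ∑ i, a i with hA
  set B := ∑ i, b i with hB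
  have hconst : ∀ c : ℝ, (∑ _i : Fin n, c) = N * c := by
    intro c; simp [Finset.sum_const, Finset.card_univ, nsmul_eq_mul, hN]
  have hA1 : N*u ≤ A := by
    rw [← hconst u]; exact Finset.sum_le_sum fun i _ => (ha i).1
  have hA2 : A ≤ N := by
    rw [← mul_one N, ← hconst 1]; exact Finset.sum_le_sum fun i _ => (ha i).2
  have hB1 : N*v ≤ B := by
    rw [← hconst v]; exact Finset.sum_le_sum fun i _ => (hb i).1
  have hB2 : B ≤ N := by
    rw [← mul_one N, ← hconst 1]; exact Finset.sum_le_sum fun i _ => (hb i).2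
  have hP : (∑ i, (a i)^2) ≤ (1+u)*A - N*u := by
    have h1 : (∑ i, (a i)^2) ≤ ∑ i, ((1+u)*a i - u) :=
      Finset.sum_le_sum fun i _ => by nlinarith [(ha i).1, (ha i).2]
    have h2 : (∑ i, ((1+u)*a i - u)) = (1+u)*A - N*u := by
      rw [Finset.sum_sub_distrib, ← Finset.mul_sum, hconst u, ← hA]
    linarith
  have hQ : (∑ i, (b i)^2) ≤ (1+v)*B - N*v := by
    have h1 : (∑ i, (b i)^2) ≤ ∑ i, ((1+v)*b i - v) :=
      Finset.sum_le_sum fun i _ => by nlinarith [(hb i).1, (hb i).2]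
    have h2 : (∑ i, ((1+v)*b i - v)) = (1+v)*B - N*v := by
      rw [Finset.sum_sub_distrib, ← Finset.mul_sum, hconst v, ← hB]
    linarith
  have hP0 : 0 ≤ (∑ i, (a i)^2) := Finset.sum_nonneg fun i _ => sq_nonneg _
  have hQ0 : 0 ≤ (∑ i, (b i)^2) := Finset.sum_nonneg fun i _ => sq_nonneg _
  have hR1 : A + B - N ≤ ∑ i, a i * b i := by
    have h1 : (∑ i, (a i + b i - 1)) ≤ ∑ i, a i * b i :=
      Finset.sum_le_sum fun i _ => by nlinarith [(ha i).2, (hb i).2]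
    have h2 : (∑ i, (a i + b i - 1)) = A + B - N := by
      rw [Finset.sum_sub_distrib, Finset.sum_add_distrib, hconst 1, ← hA, ← hB]; ring
    linarith
  have hR2 : v*A + u*B - N*(u*v) ≤ ∑ i, a i * b i := by
    have h1 : (∑ i, (v * a i + u * b i - u*v)) ≤ ∑ i, a i * b i :=
      Finset.sum_le_sum fun i _ => by nlinarith [(ha i).1, (hb i).1]
    have h2 : (∑ i, (v * a i + u * b i - u*v)) = v*A + u*B - N*(u*v) := by
      rw [Finset.sum_sub_distrib, Finset.sum_add_distrib, ← Finset.mul_sum, ← Finset.mul_sum,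
        hconst (u*v), ← hA, ← hB]
    linarith
  have hN0 : 0 ≤ N := Nat.cast_nonneg n
  have hl2 : 0 ≤ v*A + u*B - N*(u*v) := by
    have h1 : v*(N*u) ≤ v*A := mul_le_mul_of_nonneg_left hA1 hv0
    have h2 : u*(N*v) ≤ u*B := mul_le_mul_of_nonneg_left hB1 hu0
    nlinarith [mul_nonneg (mul_nonneg hN0 hu0) hv0]
  have hPQ : (∑ i, (a i)^2) * (∑ i, (b i)^2) ≤ ((1+u)*A - N*u)*((1+v)*B - N*v) :=
    mul_le_mul hP hQ hQ0 (le_trans hP0 hP)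
  rcases le_total (v*A + u*B - N*(u*v)) (A + B - N) with hcase | hcase
  · have hG := G1H N (1-u) (1-v) (N-A) (N-B) (by linarith) (by linarith) (by linarith)
      (by linarith) (by linarith) (by linarith) (by linarith) (by linarith)
      (by linarith)
    have hRnn : 0 ≤ A + B - N := le_trans hl2 hcase
    have hsq : (A + B - N)^2 ≤ (∑ i, a i * b i)^2 :=
      pow_le_pow_left₀ hRnn hR1 2
    have e1 : (N-(2-(1-u))*(N-A)) * (N-(2-(1-v))*(N-B))
        = ((1+u)*A - N*u)*((1+v)*B - N*v) := by ring
    have e2 : (N-(N-A)-(N-B)) = A + B - N := by ring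
    have e3 : N^2*((1-u)+(1-v)-(1-u)*(1-v))^2/3 = N^2/3*(1-u*v)^2 := by ring
    rw [e1, e2, e3] at hG
    linarith
  · have hG := G2H N (1-u) (1-v) (N-A) (N-B) (by linarith) (by linarith) (by linarith)
      (by linarith) (by linarith) (by linarith) (by linarith) (by linarith)
      (by linarith)
    have hsq : (v*A + u*B - N*(u*v))^2 ≤ (∑ i, a i * b i)^2 :=
      pow_le_pow_left₀ hl2 hR2 2
    have e1 : (N-(2-(1-u))*(N-A)) * (N-(2-(1-v))*(N-B))
        = ((1+u)*A - N*u)*((1+v)*B - N*v) := by ring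
    have e2 : (N-(N-A)-(N-B)+((1-v)*(N-A)+(1-u)*(N-B)-N*((1-u)*(1-v))))
        = v*A + u*B - N*(u*v) := by ring
    have e3 : N^2*((1-u)+(1-v)-(1-u)*(1-v))^2/3 = N^2/3*(1-u*v)^2 := by ring
    rw [e1, e2, e3] at hG
    linarith

theorem ozeki_izumino_mori_seo (n : ℕ) (a b : Fin n → ℝ) (m₁ M₁ m₂ M₂ : ℝ)
    (hm₁ : 0 ≤ m₁) (hm₂ : 0 ≤ m₂)
    (ha : ∀ i, m₁ ≤ a i ∧ a i ≤ M₁) (hb : ∀ i, m₂ ≤ b i ∧ b i ≤ M₂) :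
    (∑ i, (a i) ^ 2) * (∑ i, (b i) ^ 2) - (∑ i, a i * b i) ^ 2 ≤
      (n ^ 2 / 3 : ℝ) * (M₁ * M₂ - m₁ * m₂) ^ 2 := by
  rcases Nat.eq_zero_or_pos n with hn | hn
  · subst hn; simp
  · have i0 : Fin n := ⟨0, hn⟩
    by_cases hM1 : M₁ ≤ 0
    · have haz : ∀ i, a i = 0 := fun i =>
        le_antisymm (le_trans (ha i).2 hM1) (le_trans hm₁ (ha i).1)
      simp [haz]
      positivity
    by_cases hM2 : M₂ ≤ 0
    · have hbz : ∀ i, b i = 0 := fun i =>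
        le_antisymm (le_trans (hb i).2 hM2) (le_trans hm₂ (hb i).1)
      simp [hbz]
      positivity
    push_neg at hM1 hM2
    have h := core n (fun i => a i / M₁) (fun i => b i / M₂) (m₁/M₁) (m₂/M₂)
      (by positivity) (by positivity)
      ((div_le_one hM1).2 (le_trans (ha i0).1 (ha i0).2))
      ((div_le_one hM2).2 (le_trans (hb i0).1 (hb i0).2))
      (fun i => ⟨div_le_div_of_nonneg_right (ha i).1 hM1.le,
        (div_le_one hM1).2 (ha i).2⟩)
      (fun i => ⟨div_le_div_of_nonneg_right (hb i).1 hM2.le,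
        (div_le_one hM2).2 (hb i).2⟩)
    simp only [div_pow, div_mul_div_comm, ← Finset.sum_div] at h
    have hM1' : (M₁:ℝ) ≠ 0 := ne_of_gt hM1
    have hM2' : (M₂:ℝ) ≠ 0 := ne_of_gt hM2
    have key : (∑ i, (a i) ^ 2) * (∑ i, (b i) ^ 2) - (∑ i, a i * b i) ^ 2
        = (((∑ i, (a i)^2) * (∑ i, (b i)^2))/(M₁^2*M₂^2)
          - (∑ i, a i * b i)^2/(M₁*M₂)^2) * (M₁^2*M₂^2) := by
      field_simp
    have key2 : (n ^ 2 / 3 : ℝ) * (M₁ * M₂ - m₁ * m₂) ^ 2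
        = (((n:ℝ)^2/3) * (1 - m₁*m₂/(M₁*M₂))^2) * (M₁^2*M₂^2) := by
      field_simp
    rw [key, key2]
    exact mul_le_mul_of_nonneg_right h (by positivity)
end
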